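/- (μ-smooth approximation is uniformly close to the original function.) Let d : ℕ, L ≥ 0 and μ : ℝ, and let f : EuclideanSpace ℝ (Fin d) → ℝ have L-Lipschitz gradient. Then for every x, the map u ↦ f(x + μ • u) is γ_d-integrable, and |∫ f(x + μ • u) ∂γ_d(u) − f(x)| ≤ (μ² · L · d)/2. In other words, the μ-smooth approximation f_μ(x) := ∫ f(x + μ • u) ∂γ_d(u) satisfies |f_μ(x) − f(x)| ≤ μ²·L·d/2 for every x. -/

import Mathlib

/-!
Along the segment from `x` to `y`, the `L`-Lipschitz gradient gives the descent-lemma bound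
`|f y - f x - ⟪∇f x, y - x⟫| ≤ L/2 ‖y - x‖²`. Averaging it at `y = x + μ • u` over a centred
measure kills the linear term, so `|𝔼 f(x + μ • u) - f x| ≤ μ² L/2 𝔼‖u‖²`, and for the standard
Gaussian on `ℝᵈ` the second moment `𝔼‖u‖²` is the trace `d` of its identity covariance.
-/

open MeasureTheory RealInnerProductSpace

/-- The standard Gaussian measure on `EuclideanSpace ℝ (Fin d)`, i.e. the product of `d`
copies of the real standard Gaussian measure. -/
noncomputable def stdGaussian (d : ℕ) : Measure (EuclideanSpace ℝ (Fin d)) :=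
  Measure.map (MeasurableEquiv.toLp 2 (Fin d → ℝ))
    (Measure.pi (fun _ : Fin d => ProbabilityTheory.gaussianReal 0 1))

section LipschitzGradient

variable {E : Type*} [NormedAddCommGroup E] [InnerProductSpace ℝ E] [CompleteSpace E]
  {f : E → ℝ} {L : ℝ}

lemma abs_sub_sub_inner_gradient_le (hf : Differentiable ℝ f)
    (hlip : ∀ x y, ‖gradient f x - gradient f y‖ ≤ L * ‖x - y‖) (x y : E) :
    |f y - f x - ⟪gradient f x, y - x⟫| ≤ L / 2 * ‖y - x‖ ^ 2 := by
  set v := y - x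
  have hderiv (t : ℝ) :
      HasDerivAt (fun t : ℝ => f (x + t • v) - f x - t * ⟪gradient f x, v⟫)
        (⟪gradient f (x + t • v), v⟫ - ⟪gradient f x, v⟫) t := by
    have hline : HasDerivAt (fun t : ℝ => x + t • v) v t := by
      simpa using ((hasDerivAt_id t).smul_const v).const_add x
    have hcomp := (hf (x + t • v)).hasGradientAt.hasFDerivAt.comp_hasDerivAt t hline
    rw [InnerProductSpace.toDual_apply_apply] at hcomp
    exact (hcomp.sub_const (f x)).sub (hasDerivAt_mul_const ⟪gradient f x, v⟫)
  have hboundary (t : ℝ) :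
      HasDerivAt (fun t : ℝ => L / 2 * ‖v‖ ^ 2 * t ^ 2) (L * ‖v‖ ^ 2 * t) t := by
    refine ((hasDerivAt_pow 2 t).const_mul (L / 2 * ‖v‖ ^ 2)).congr_deriv ?_
    norm_num
    ring
  have hbound (t : ℝ) (ht : t ∈ Set.Ico (0 : ℝ) 1) :
      ‖⟪gradient f (x + t • v), v⟫ - ⟪gradient f x, v⟫‖ ≤ L * ‖v‖ ^ 2 * t :=
    calc ‖⟪gradient f (x + t • v), v⟫ - ⟪gradient f x, v⟫‖
        = ‖⟪gradient f (x + t • v) - gradient f x, v⟫‖ := by rw [inner_sub_left]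
      _ ≤ ‖gradient f (x + t • v) - gradient f x‖ * ‖v‖ := norm_inner_le_norm _ _
      _ ≤ L * ‖x + t • v - x‖ * ‖v‖ := by gcongr; exact hlip _ _
      _ = L * ‖v‖ ^ 2 * t := by
        rw [add_sub_cancel_left, norm_smul, Real.norm_of_nonneg ht.1]; ring
  -- fencing: the remainder stays below `L/2 ‖v‖² t²`, whose derivative dominates its own
  have h := image_norm_le_of_norm_deriv_right_le_deriv_boundary
    (fun t _ => (hderiv t).continuousAt.continuousWithinAt)
    (fun t _ => (hderiv t).hasDerivWithinAt) (by simp) hboundary hbound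
    (Set.right_mem_Icc.2 zero_le_one)
  simpa [v] using h

lemma abs_comp_add_smul_sub_sub_inner_gradient_le (hf : Differentiable ℝ f)
    (hlip : ∀ x y, ‖gradient f x - gradient f y‖ ≤ L * ‖x - y‖) (x u : E) (μ : ℝ) :
    |f (x + μ • u) - f x - ⟪gradient f x, μ • u⟫| ≤ μ ^ 2 * L / 2 * ‖u‖ ^ 2 :=
  calc |f (x + μ • u) - f x - ⟪gradient f x, μ • u⟫|
      ≤ L / 2 * ‖μ • u‖ ^ 2 := by
        simpa using abs_sub_sub_inner_gradient_le hf hlip x (x + μ • u)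
    _ = μ ^ 2 * L / 2 * ‖u‖ ^ 2 := by rw [norm_smul, mul_pow, Real.norm_eq_abs, sq_abs]; ring

variable [MeasurableSpace E] [BorelSpace E] {ν : Measure E}

lemma integrable_comp_add_smul_sub_sub_inner_gradient (hf : Differentiable ℝ f)
    (hlip : ∀ x y, ‖gradient f x - gradient f y‖ ≤ L * ‖x - y‖)
    (hν : Integrable (fun u => ‖u‖ ^ 2) ν) (x : E) (μ : ℝ) :
    Integrable (fun u => f (x + μ • u) - f x - ⟪gradient f x, μ • u⟫) ν := by
  have hcont := hf.continuous
  exact (hν.const_mul (μ ^ 2 * L / 2)).mono' (by fun_prop)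
    (ae_of_all _ (abs_comp_add_smul_sub_sub_inner_gradient_le hf hlip x · μ))

lemma integrable_comp_add_smul [IsFiniteMeasure ν] (hf : Differentiable ℝ f)
    (hlip : ∀ x y, ‖gradient f x - gradient f y‖ ≤ L * ‖x - y‖)
    (hν₁ : Integrable id ν) (hν₂ : Integrable (fun u => ‖u‖ ^ 2) ν) (x : E) (μ : ℝ) :
    Integrable (fun u => f (x + μ • u)) ν := by
  have hsmul : Integrable (fun u => μ • u) ν := hν₁.smul μ
  refine (((integrable_comp_add_smul_sub_sub_inner_gradient hf hlip hν₂ x μ).add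
    (integrable_const (f x))).add (hsmul.const_inner (gradient f x))).congr
    (ae_of_all _ fun u => ?_)
  simp only [Pi.add_apply]
  ring

lemma abs_integral_comp_add_smul_sub_le [IsProbabilityMeasure ν] (hf : Differentiable ℝ f)
    (hlip : ∀ x y, ‖gradient f x - gradient f y‖ ≤ L * ‖x - y‖)
    (hν₁ : Integrable id ν) (hmean : ∫ u, u ∂ν = 0)
    (hν₂ : Integrable (fun u => ‖u‖ ^ 2) ν) (x : E) (μ : ℝ) :
    |∫ u, f (x + μ • u) ∂ν - f x| ≤ μ ^ 2 * L / 2 * ∫ u, ‖u‖ ^ 2 ∂ν := by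
  have hF := integrable_comp_add_smul hf hlip hν₁ hν₂ x μ
  have hsmul : Integrable (fun u => μ • u) ν := hν₁.smul μ
  have hlin_zero : ∫ u, ⟪gradient f x, μ • u⟫ ∂ν = 0 := by
    rw [integral_inner hsmul, integral_smul, hmean, smul_zero, inner_zero_right]
  have hsplit : ∫ u, f (x + μ • u) ∂ν - f x
      = ∫ u, (f (x + μ • u) - f x - ⟪gradient f x, μ • u⟫) ∂ν := by
    have hF_sub : Integrable (fun u => f (x + μ • u) - f x) ν := hF.sub (integrable_const _)
    rw [integral_sub hF_sub (hsmul.const_inner _), integral_sub hF (integrable_const _),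
      hlin_zero, integral_const, probReal_univ, one_smul, sub_zero]
  calc |∫ u, f (x + μ • u) ∂ν - f x|
      ≤ ∫ u, |f (x + μ • u) - f x - ⟪gradient f x, μ • u⟫| ∂ν := by
        rw [hsplit]; exact abs_integral_le_integral_abs
    _ ≤ ∫ u, μ ^ 2 * L / 2 * ‖u‖ ^ 2 ∂ν :=
        integral_mono (integrable_comp_add_smul_sub_sub_inner_gradient hf hlip hν₂ x μ).abs
          (hν₂.const_mul _) (abs_comp_add_smul_sub_sub_inner_gradient_le hf hlip x · μ)
    _ = μ ^ 2 * L / 2 * ∫ u, ‖u‖ ^ 2 ∂ν := integral_const_mul _ _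

end LipschitzGradient

namespace ProbabilityTheory

variable {E : Type*} [NormedAddCommGroup E] [InnerProductSpace ℝ E] [FiniteDimensional ℝ E]
  [MeasurableSpace E] [BorelSpace E]

lemma integral_inner_mul_inner_stdGaussian (x y : E) :
    ∫ u, ⟪x, u⟫ * ⟪y, u⟫ ∂(stdGaussian E) = ⟪x, y⟫ := by
  have h := covarianceBilin_apply (IsGaussian.memLp_two_id (μ := stdGaussian E)) x y
  simpa [covarianceBilin_stdGaussian, innerSL_apply_apply ℝ] using h.symm

lemma integrable_norm_sq_stdGaussian : Integrable (fun u => ‖u‖ ^ 2) (stdGaussian E) :=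
  IsGaussian.memLp_two_id.integrable_norm_pow two_ne_zero

lemma integral_norm_sq_stdGaussian :
    ∫ u, ‖u‖ ^ 2 ∂(stdGaussian E) = Module.finrank ℝ E := by
  set b := stdOrthonormalBasis ℝ E
  have hint (i) : Integrable (fun u => ⟪b i, u⟫ ^ 2) (stdGaussian E) :=
    (IsGaussian.memLp_two_id.const_inner (b i)).integrable_sq
  simp_rw [← b.sum_sq_inner_right]
  rw [integral_finsetSum _ fun i _ => hint i]
  simp [sq, integral_inner_mul_inner_stdGaussian]

end ProbabilityTheory

lemma stdGaussian_eq_stdGaussian_euclideanSpace (d : ℕ) :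
    stdGaussian d = ProbabilityTheory.stdGaussian (EuclideanSpace ℝ (Fin d)) :=
  ProbabilityTheory.map_pi_eq_stdGaussian

theorem smooth_approximation_close_general
    (d : ℕ) (L μ : ℝ)
    (f : EuclideanSpace ℝ (Fin d) → ℝ)
    (hdiff : Differentiable ℝ f)
    (hlip : ∀ x y, ‖gradient f x - gradient f y‖ ≤ L * ‖x - y‖) :
    ∀ x : EuclideanSpace ℝ (Fin d),
      Integrable (fun u => f (x + μ • u)) (stdGaussian d) ∧
      |(∫ u, f (x + μ • u) ∂(stdGaussian d)) - f x| ≤ μ ^ 2 * L * (d : ℝ) / 2 := by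
  intro x
  set γ := ProbabilityTheory.stdGaussian (EuclideanSpace ℝ (Fin d))
  rw [stdGaussian_eq_stdGaussian_euclideanSpace]
  have hid : Integrable id γ := ProbabilityTheory.IsGaussian.integrable_id
  have hmean : ∫ u, u ∂γ = 0 := ProbabilityTheory.integral_id_stdGaussian
  have hsq : Integrable (fun u => ‖u‖ ^ 2) γ :=
    ProbabilityTheory.integrable_norm_sq_stdGaussian
  refine ⟨integrable_comp_add_smul hdiff hlip hid hsq x μ, ?_⟩
  calc _ ≤ μ ^ 2 * L / 2 * ∫ u, ‖u‖ ^ 2 ∂γ :=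
        abs_integral_comp_add_smul_sub_le hdiff hlip hid hmean hsq x μ
    _ = μ ^ 2 * L * d / 2 := by
        rw [ProbabilityTheory.integral_norm_sq_stdGaussian, finrank_euclideanSpace_fin]; ring

/-- **μ-smooth approximation is uniformly close to the original function.**
If `f` has `L`-Lipschitz gradient, then for every `x` the map `u ↦ f (x + μ • u)` is
integrable against the standard Gaussian and the μ-smooth approximation
`f_μ(x) = ∫ f (x + μ • u) dγ_d(u)` satisfies `|f_μ(x) − f(x)| ≤ μ²·L·d/2`. -/
theorem smooth_approximation_close
    (d : ℕ) (L μ : ℝ) (hL : 0 ≤ L)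
    (f : EuclideanSpace ℝ (Fin d) → ℝ)
    (hdiff : Differentiable ℝ f)
    (hlip : ∀ x y, ‖gradient f x - gradient f y‖ ≤ L * ‖x - y‖) :
    ∀ x : EuclideanSpace ℝ (Fin d),
      Integrable (fun u => f (x + μ • u)) (stdGaussian d) ∧
      |(∫ u, f (x + μ • u) ∂(stdGaussian d)) - f x| ≤ μ ^ 2 * L * (d : ℝ) / 2 :=
  smooth_approximation_close_general d L μ f hdiff hlip
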